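/- arXiv:1601.00668 — 4 statements merged into one kernel-verified Lean document; each statement's English description precedes it below -/
import Mathlib

section
/- For every n ≥ 1 and every infinite reduced word ξ ∈ B, the sum Σ_{γ ∈ S_n} (2r-1)^{(γ|ξ) − n/2} equals (2r + 2(r-1)n) · (2r-1)^{n/2 − 1}. In particular the function ξ ↦ Σ_{γ∈S_n} P(γ,ξ)^{1/2} is constant on B, equal to |S_n| · Ξ(n), where P(γ,ξ)^{1/2} = (2r-1)^{(γ|ξ) − |γ|/2}. -/
/-!
Setting: the free group `F_r = ⟨a₁,…,a_r⟩` (`r ≥ 2`), its boundary `B` of infinite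
reduced words, the visual measure `μ` on `B`, the Gromov product, the Poisson kernel
`P(γ,ξ) = (2r-1)^(2(γ|ξ)-|γ|)` and the Harish-Chandra function `Ξ`.
-/

open MeasureTheory Filter Topology ComplexConjugate
open scoped ENNReal

namespace ArxivFree

/-- The alphabet `S = {a₁^{±1},…,a_r^{±1}}` of generators and their inverses:
a letter is a generator together with a sign. -/
abbrev Letter (r : ℕ) := Fin r × Bool

/-- The inverse of a letter. -/
def bar {r : ℕ} (x : Letter r) : Letter r := (x.1, !x.2)

/-- The boundary `B`: infinite reduced words over the alphabet, i.e. sequences of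
letters in which no letter is immediately followed by its inverse. -/
abbrev Boundary (r : ℕ) := {ξ : ℕ → Letter r // ∀ i, ξ (i + 1) ≠ bar (ξ i)}

/-- `l` is a (finite) prefix of the infinite word `ξ`. -/
def IsPrefixSeq {r : ℕ} (l : List (Letter r)) (ξ : ℕ → Letter r) : Prop :=
  ∀ i, i < l.length → l[i]? = some (ξ i)

/-- The cylinder `B_u`: infinite reduced words admitting the reduced word of `u`
as a prefix. -/
def cylinder {r : ℕ} (u : FreeGroup (Fin r)) : Set (Boundary r) :=
  {ξ | IsPrefixSeq (FreeGroup.toWord u) ξ.1}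

/-- The Gromov product: the length of the longest common prefix of the finite word `l`
and the infinite word `ξ`. -/
def gromov {r : ℕ} (l : List (Letter r)) (ξ : ℕ → Letter r) : ℕ :=
  Nat.findGreatest (fun k => ∀ i, i < k → l[i]? = some (ξ i)) l.length

/-- The Poisson kernel `P(γ,ξ) = (2r-1)^(2(γ|ξ) - |γ|)`. -/
noncomputable def PK {r : ℕ} (γ : FreeGroup (Fin r)) (ξ : Boundary r) : ℝ :=
  (2 * (r : ℝ) - 1) ^
    (2 * (gromov (FreeGroup.toWord γ) ξ.1 : ℤ) - ((FreeGroup.toWord γ).length : ℤ))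

/-- The sphere `S_n ⊆ F_r` of elements of word length `n`, as a finite set. -/
noncomputable def sphere (r n : ℕ) : Finset (FreeGroup (Fin r)) :=
  (Set.Finite.preimage (Function.Injective.injOn FreeGroup.toWord_injective)
    (List.finite_length_eq (Letter r) n)).toFinset

/-- The Harish-Chandra function `Ξ(γ) = ∫_B P(γ,ξ)^{1/2} dμ(ξ)`. -/
noncomputable def HC {r : ℕ} (μ : Measure (Boundary r)) (γ : FreeGroup (Fin r)) : ℝ :=
  ∫ ξ, Real.sqrt (PK γ ξ) ∂μ

/-!
Write `q = 2r - 1` and split a sphere according to the first letter of its words. A reduced word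
has positive Gromov product with `ξ` only if it starts with `ξ 0`, and deleting that letter lowers
the Gromov product by one against the shifted sequence; each of the other letters carries `q ^ n`
continuations, all of Gromov product zero. For the sum `T n` of `q ^ (w|ξ)` over the reduced words
`w` of length `n` allowed after a fixed letter this gives `T (n + 1) = q T n + (q - 1) q ^ n`,
i.e. `q T n + n q ^ n = (n + 1) q ^ (n + 1)`, the form in which it is proved over `ℕ`. The sphere
sum is then `(n + 2) q ^ (n + 1) - n q ^ n = (2r + 2(r - 1)(n + 1)) q ^ n`, and the rest is
exponent arithmetic.
-/

theorem _root_.Nat.findGreatest_succ_eq_of_iff {P Q : ℕ → Prop} [DecidablePred P]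
    [DecidablePred Q] (hQ : ∀ k, Q (k + 1) ↔ P k) (hP : P 0) (n : ℕ) :
    Nat.findGreatest Q (n + 1) = Nat.findGreatest P n + 1 := by
  induction n with
  | zero => simp [(hQ 0).mpr hP]
  | succ n ih => by_cases h : P (n + 1) <;> simp [hQ, h, ih]

theorem _root_.Finset.sum_biUnion_image_cons {α M : Type*} [DecidableEq α] [AddCommMonoid M]
    (s : Finset α) (f : α → Finset (List α)) (g : List α → M) :
    ∑ l ∈ s.biUnion (fun z => (f z).image (z :: ·)), g l = ∑ z ∈ s, ∑ t ∈ f z, g (z :: t) := by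
  rw [Finset.sum_biUnion]
  · exact Finset.sum_congr rfl fun z _ => Finset.sum_image fun _ _ _ _ h => List.cons_injective h
  · intro z _ z' _ hne
    simp only [Function.onFun, Finset.disjoint_left, Finset.mem_image]
    rintro _ ⟨t, -, rfl⟩ ⟨t', -, h⟩
    exact hne (List.cons_eq_cons.mp h).1.symm

theorem _root_.Real.rpow_natCast_sub_div_two {b : ℝ} (hb : 0 < b) (k n : ℕ) :
    b ^ ((k : ℝ) - n / 2) = b ^ k * b ^ (-(n : ℝ) / 2) := by
  rw [← Real.rpow_natCast, ← Real.rpow_add hb]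
  ring_nf

theorem _root_.Real.rpow_succ_div_two_sub_one {b : ℝ} (hb : 0 < b) (n : ℕ) :
    b ^ (((n + 1 : ℕ) : ℝ) / 2 - 1) = b ^ n * b ^ (-((n + 1 : ℕ) : ℝ) / 2) := by
  rw [← Real.rpow_natCast_sub_div_two hb]
  push_cast
  ring_nf

variable {r : ℕ}

lemma pos_of_boundary (ξ : Boundary r) : 0 < r :=
  (ξ.1 0).1.pos

lemma cast_two_mul_sub_one (hr : 0 < r) : ((2 * r - 1 : ℕ) : ℝ) = 2 * r - 1 := by
  rw [Nat.cast_sub (by omega)]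
  push_cast
  ring

lemma two_mul_cast_sub_one_pos (hr : 0 < r) : (0 : ℝ) < 2 * r - 1 := by
  have : (1 : ℝ) ≤ r := Nat.one_le_cast.mpr hr
  linarith

lemma ne_bar_iff {x y : Letter r} : y ≠ bar x ↔ (x.1 = y.1 → x.2 = y.2) := by
  obtain ⟨a, b⟩ := x
  obtain ⟨c, d⟩ := y
  cases b <;> cases d <;> simp [bar, eq_comm]

lemma card_erase_bar (x : Letter r) : (Finset.univ.erase (bar x)).card = 2 * r - 1 := by
  simp [Finset.card_erase_of_mem, mul_comm]

lemma gromov_cons_of_ne {z : Letter r} {ξ : ℕ → Letter r} (h : z ≠ ξ 0) (t : List (Letter r)) :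
    gromov (z :: t) ξ = 0 := by
  rw [gromov, Nat.findGreatest_eq_zero_iff]
  intro k hk _ hP
  exact h (by simpa using hP 0 hk)

lemma gromov_cons_self (ξ : ℕ → Letter r) (t : List (Letter r)) :
    gromov (ξ 0 :: t) ξ = gromov t (fun i => ξ (i + 1)) + 1 :=
  Nat.findGreatest_succ_eq_of_iff (fun k => by rw [Nat.forall_lt_succ_left]; simp) (by simp) _

def followers (r : ℕ) : ℕ → Letter r → Finset (List (Letter r))
  | 0, _ => {[]}
  | n + 1, x => (Finset.univ.erase (bar x)).biUnion fun z => (followers r n z).image (z :: ·)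

lemma mem_followers {n : ℕ} {x : Letter r} {l : List (Letter r)} :
    l ∈ followers r n x ↔ l.length = n ∧ FreeGroup.IsReduced (x :: l) := by
  induction n generalizing x l with
  | zero => cases l <;> simp [followers]
  | succ n ih =>
    cases l with
    | nil => simp [followers]
    | cons z t => simp [followers, ih, FreeGroup.isReduced_cons_cons, ne_bar_iff, and_left_comm]

lemma card_followers (n : ℕ) (x : Letter r) : (followers r n x).card = (2 * r - 1) ^ n := by
  induction n generalizing x with
  | zero => simp [followers]
  | succ n ih =>
    rw [Finset.card_eq_sum_ones, followers, Finset.sum_biUnion_image_cons]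
    simp only [ih, Finset.sum_const, card_erase_bar, smul_eq_mul, mul_one, pow_succ']

lemma mem_sphere {n : ℕ} {γ : FreeGroup (Fin r)} : γ ∈ sphere r n ↔ γ.toWord.length = n := by
  simp [sphere]

lemma image_toWord_sphere_succ (n : ℕ) :
    (sphere r (n + 1)).image FreeGroup.toWord =
      Finset.univ.biUnion fun z => (followers r n z).image (z :: ·) := by
  ext l
  simp only [Finset.mem_image, mem_sphere, Finset.mem_biUnion, Finset.mem_univ, true_and,
    mem_followers]
  constructor
  · rintro ⟨γ, hγ, rfl⟩
    obtain ⟨z, t, ht⟩ := List.exists_cons_of_length_eq_add_one hγ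
    exact ⟨z, t, ⟨by simpa [ht] using hγ, ht ▸ FreeGroup.isReduced_toWord⟩, ht.symm⟩
  · rintro ⟨z, t, ⟨hlen, hred⟩, rfl⟩
    refine ⟨FreeGroup.mk (z :: t), ?_, ?_⟩ <;> simp [FreeGroup.toWord_mk, hred.reduce_eq, hlen]

lemma sum_sphere_succ {M : Type*} [AddCommMonoid M] (n : ℕ) (g : List (Letter r) → M) :
    ∑ γ ∈ sphere r (n + 1), g γ.toWord = ∑ z, ∑ t ∈ followers r n z, g (z :: t) := by
  rw [← Finset.sum_image fun _ _ _ _ h => FreeGroup.toWord_injective h,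
    image_toWord_sphere_succ, Finset.sum_biUnion_image_cons]

lemma card_sphere_succ (n : ℕ) : (sphere r (n + 1)).card = 2 * r * (2 * r - 1) ^ n := by
  rw [← Finset.card_image_of_injective _ FreeGroup.toWord_injective, image_toWord_sphere_succ,
    Finset.card_eq_sum_ones, Finset.sum_biUnion_image_cons]
  simp [card_followers, mul_comm]

lemma sum_pow_gromov_cons {ξ : ℕ → Letter r} {s : Finset (Letter r)} (hs : ξ 0 ∈ s) (n : ℕ) :
    ∑ z ∈ s, ∑ t ∈ followers r n z, (2 * r - 1) ^ gromov (z :: t) ξ + (2 * r - 1) ^ n =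
      (2 * r - 1) * ∑ t ∈ followers r n (ξ 0), (2 * r - 1) ^ gromov t (fun i => ξ (i + 1)) +
        s.card * (2 * r - 1) ^ n := by
  have hside : ∑ z ∈ s.erase (ξ 0), ∑ t ∈ followers r n z, (2 * r - 1) ^ gromov (z :: t) ξ =
      (s.erase (ξ 0)).card * (2 * r - 1) ^ n := by
    rw [Finset.sum_congr rfl fun z hz => ?_, Finset.sum_const, smul_eq_mul]
    simp [gromov_cons_of_ne (Finset.ne_of_mem_erase hz), card_followers]
  rw [← Finset.add_sum_erase s _ hs, hside, ← Finset.card_erase_add_one hs]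
  simp only [gromov_cons_self, pow_succ', ← Finset.mul_sum]
  ring

theorem sum_pow_gromov_followers {ξ : ℕ → Letter r} (hξ : ∀ i, ξ (i + 1) ≠ bar (ξ i))
    {x : Letter r} (hx : ξ 0 ≠ bar x) (n : ℕ) :
    (∑ t ∈ followers r n x, (2 * r - 1) ^ gromov t ξ) * (2 * r - 1) + n * (2 * r - 1) ^ n =
      (n + 1) * (2 * r - 1) ^ (n + 1) := by
  induction n generalizing x ξ with
  | zero => simp [followers, gromov]
  | succ n ih =>
    have hstep := sum_pow_gromov_cons (Finset.mem_erase.mpr ⟨hx, Finset.mem_univ _⟩) n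
    have hrec := ih (ξ := fun i => ξ (i + 1)) (fun i => hξ (i + 1)) (hξ 0)
    rw [card_erase_bar] at hstep
    rw [followers, Finset.sum_biUnion_image_cons]
    linear_combination (2 * r - 1) * hstep + (2 * r - 1) * hrec

theorem sum_pow_gromov_sphere_succ (ξ : Boundary r) (n : ℕ) :
    ∑ γ ∈ sphere r (n + 1), (2 * r - 1) ^ gromov γ.toWord ξ.1 + n * (2 * r - 1) ^ n =
      (n + 2) * (2 * r - 1) ^ (n + 1) := by
  have hstep := sum_pow_gromov_cons (Finset.mem_univ (ξ.1 0)) n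
  have hrec := sum_pow_gromov_followers (ξ := fun i => ξ.1 (i + 1)) (fun i => ξ.2 (i + 1))
    (ξ.2 0) n
  have hcard : (Finset.univ : Finset (Letter r)).card = 2 * r - 1 + 1 := by
    have := pos_of_boundary ξ
    simp
    omega
  rw [hcard] at hstep
  rw [sum_sphere_succ n fun w => (2 * r - 1) ^ gromov w ξ.1]
  linear_combination hstep + hrec

lemma sum_rpow_gromov_sphere_succ (ξ : Boundary r) (n : ℕ) :
    ∑ γ ∈ sphere r (n + 1),
        (2 * (r : ℝ) - 1) ^ ((gromov γ.toWord ξ.1 : ℝ) - ((n + 1 : ℕ) : ℝ) / 2) =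
      (2 * r + 2 * (r - 1) * ((n + 1 : ℕ) : ℝ)) *
        (2 * (r : ℝ) - 1) ^ (((n + 1 : ℕ) : ℝ) / 2 - 1) := by
  have hr := pos_of_boundary ξ
  have hsum := congrArg (Nat.cast : ℕ → ℝ) (sum_pow_gromov_sphere_succ ξ n)
  push_cast [cast_two_mul_sub_one hr] at hsum
  simp only [Real.rpow_natCast_sub_div_two (two_mul_cast_sub_one_pos hr),
    Real.rpow_succ_div_two_sub_one (two_mul_cast_sub_one_pos hr), ← Finset.sum_mul]
  set c := (2 * (r : ℝ) - 1) ^ (-((n + 1 : ℕ) : ℝ) / 2)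
  push_cast
  linear_combination c * hsum

lemma sqrt_PK (γ : FreeGroup (Fin r)) (ξ : Boundary r) :
    √(PK γ ξ) = (2 * (r : ℝ) - 1) ^ ((gromov γ.toWord ξ.1 : ℝ) - γ.toWord.length / 2) := by
  rw [PK, ← Real.rpow_intCast, Real.sqrt_eq_rpow,
    ← Real.rpow_mul (two_mul_cast_sub_one_pos (pos_of_boundary ξ)).le]
  push_cast
  ring_nf

theorem sum_sqrt_poisson_constant_general {r : ℕ} {n : ℕ} (hn : 1 ≤ n)
    (ξ : Boundary r) :
    (∑ γ ∈ sphere r n,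
        (2 * (r : ℝ) - 1) ^ ((gromov (FreeGroup.toWord γ) ξ.1 : ℝ) - (n : ℝ) / 2)) =
      (2 * (r : ℝ) + 2 * ((r : ℝ) - 1) * n) * (2 * (r : ℝ) - 1) ^ ((n : ℝ) / 2 - 1) ∧
    (∑ γ ∈ sphere r n, Real.sqrt (PK γ ξ)) =
      ((sphere r n).card : ℝ) *
        ((1 + ((r : ℝ) - 1) * n / r) * (2 * (r : ℝ) - 1) ^ (-(n : ℝ) / 2)) := by
  obtain ⟨m, rfl⟩ := Nat.exists_eq_add_of_le' hn
  have hr := pos_of_boundary ξ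
  have hsum := sum_rpow_gromov_sphere_succ ξ m
  refine ⟨hsum, ?_⟩
  rw [Finset.sum_congr rfl fun γ hγ => by rw [sqrt_PK, mem_sphere.mp hγ], hsum,
    card_sphere_succ, Real.rpow_succ_div_two_sub_one (two_mul_cast_sub_one_pos hr)]
  push_cast [cast_two_mul_sub_one hr]
  field_simp

/-- the sum of square roots of the Poisson kernel is constant on the boundary B.
For $n ≥ 1$ and every $ξ ∈ B$,
$Σ_{γ ∈ S_n} (2r-1)^{(γ|ξ) - n/2} = (2r + 2(r-1)n)(2r-1)^{n/2 - 1}$; in particular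
$ξ ↦ Σ_{γ∈S_n} P(γ,ξ)^{1/2}$ is constant, equal to $|S_n|·Ξ(n)$ where
$Ξ(n) = (1 + (r-1)n/r)(2r-1)^{-n/2}$. -/
theorem sum_sqrt_poisson_constant {r : ℕ} (hr : 2 ≤ r) {n : ℕ} (hn : 1 ≤ n)
    (ξ : Boundary r) :
    (∑ γ ∈ sphere r n,
        (2 * (r : ℝ) - 1) ^ ((gromov (FreeGroup.toWord γ) ξ.1 : ℝ) - (n : ℝ) / 2)) =
      (2 * (r : ℝ) + 2 * ((r : ℝ) - 1) * n) * (2 * (r : ℝ) - 1) ^ ((n : ℝ) / 2 - 1) ∧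
    (∑ γ ∈ sphere r n, Real.sqrt (PK γ ξ)) =
      ((sphere r n).card : ℝ) *
        ((1 + ((r : ℝ) - 1) * n / r) * (2 * (r : ℝ) - 1) ^ (-(n : ℝ) / 2)) :=
  sum_sqrt_poisson_constant_general hn ξ

end ArxivFree
end

section
/- Let (Z, ν) be a probability measure space and let T be a continuous linear operator from L¹(Z,ν) to itself such that T maps L²(Z,ν) into L²(Z,ν) and L^∞(Z,ν) into L^∞(Z,ν), the restriction T₂ of T to L²(Z,ν) is a bounded self-adjoint operator, and the restriction T_∞ of T to L^∞(Z,ν) has operator norm at most 1 on L^∞. Then ‖T₂‖_{L²→L²} ≤ 1. -/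
/-!
For bounded `f`, self-adjointness and Cauchy–Schwarz give
`‖Tⁿ⁺¹f‖₂² ≤ ‖Tⁿf‖₂ ‖Tⁿ⁺²f‖₂`, so `n ↦ ‖Tⁿf‖₂` is log-convex; it is bounded by `‖f‖_∞`
because `T` contracts `L^∞`. A bounded log-convex sequence cannot increase at its start,
hence `‖Tf‖₂ ≤ ‖f‖₂`. A general `f ∈ L²` is the limit in `L²`, hence in `L¹`, of simple
functions; continuity of `T` on `L¹` and Fatou's lemma along an a.e. convergent subsequence
carry the bound over to `f`.
-/

open MeasureTheory ComplexConjugate Filter Topology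
open scoped ENNReal

theorem le_of_sq_le_mul_of_bddAbove {b : ℕ → ℝ} (hb0 : ∀ n, 0 ≤ b n)
    (hbdd : BddAbove (Set.range b)) (hlog : ∀ n, b (n + 1) ^ 2 ≤ b n * b (n + 2)) : b 1 ≤ b 0 := by
  obtain ⟨B, hB⟩ := hbdd
  by_contra! h01
  have hpos : 0 < b 0 := (hb0 0).lt_of_ne fun h0 => by nlinarith [hlog 0, hb0 2]
  set r := b 1 / b 0 with hr
  have hr1 : 1 < r := (one_lt_div hpos).2 h01
  have growth : ∀ n, r * b n ≤ b (n + 1) := by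
    intro n
    induction n with
    | zero => rw [hr, div_mul_cancel₀ _ hpos.ne']
    | succ n ih =>
      rcases (hb0 n).eq_or_lt with h0 | h0
      · have hsq := hlog n
        rw [← h0, zero_mul] at hsq
        rw [pow_eq_zero_iff two_ne_zero |>.mp (le_antisymm hsq (sq_nonneg _)), mul_zero]
        exact hb0 _
      · refine le_of_mul_le_mul_right ?_ h0
        nlinarith [hlog n, hb0 (n + 1)]
  have geometric : ∀ n, b 0 * r ^ n ≤ b n := by
    intro n
    induction n with
    | zero => simp
    | succ n ih =>
      calc b 0 * r ^ (n + 1) = r * (b 0 * r ^ n) := by ring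
        _ ≤ r * b n := mul_le_mul_of_nonneg_left ih (by linarith)
        _ ≤ b (n + 1) := growth n
  obtain ⟨n, hn⟩ := pow_unbounded_of_one_lt (B / b 0) hr1
  rw [div_lt_iff₀' hpos] at hn
  linarith [geometric n, hB ⟨n, rfl⟩]

section

variable {Z E F : Type*} [MeasurableSpace Z] {ν : Measure Z}
  [NormedAddCommGroup E] [NormedAddCommGroup F]

theorem MeasureTheory.MemLp.exists_seq_memLp_top_tendsto_eLpNorm_sub [IsFiniteMeasure ν]
    {p : ℝ≥0∞} {f : Z → E} (hf : MemLp f p ν) (hp : p ≠ ⊤) :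
    ∃ g : ℕ → Lp E 1 ν, (∀ n, MemLp (g n) ⊤ ν) ∧
      Tendsto (fun n => eLpNorm (⇑(g n) - f) p ν) atTop (𝓝 0) := by
  choose s hs _ using fun n : ℕ => hf.exists_simpleFunc_eLpNorm_sub_lt hp
    (ENNReal.inv_ne_zero.2 (ENNReal.natCast_ne_top n))
  have hs1 : ∀ n, MemLp (s n) 1 ν := fun n => (s n).memLp_top ν |>.mono_exponent le_top
  refine ⟨fun n => (hs1 n).toLp _, fun n => ((s n).memLp_top ν).ae_eq (hs1 n).coeFn_toLp.symm,
    ?_⟩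
  refine tendsto_of_tendsto_of_tendsto_of_le_of_le tendsto_const_nhds
    ENNReal.tendsto_inv_nat_nhds_zero (fun n => zero_le) fun n => ?_
  rw [eLpNorm_sub_comm]
  calc eLpNorm (f - ⇑((hs1 n).toLp _)) p ν = eLpNorm (f - ⇑(s n)) p ν :=
        eLpNorm_congr_ae (EventuallyEq.rfl.sub (hs1 n).coeFn_toLp)
    _ ≤ _ := (hs n).le

theorem eLpNorm_le_of_tendsto_Lp_of_eLpNorm_le {q : ℝ≥0∞} [Fact (1 ≤ q)] {p : ℝ≥0∞}
    {g : ℕ → Lp F q ν} {g₀ : Lp F q ν} (hg : Tendsto g atTop (𝓝 g₀)) {a : ℕ → ℝ≥0∞} {L : ℝ≥0∞}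
    (ha : Tendsto a atTop (𝓝 L)) (hle : ∀ n, eLpNorm (g n) p ν ≤ a n) :
    eLpNorm g₀ p ν ≤ L := by
  obtain ⟨ns, hns, hae⟩ := (tendstoInMeasure_of_tendsto_Lp hg).exists_seq_tendsto_ae
  calc eLpNorm g₀ p ν ≤ atTop.liminf fun k => eLpNorm (g (ns k)) p ν :=
        Lp.eLpNorm_lim_le_liminf_eLpNorm (fun k => Lp.aestronglyMeasurable _) _ hae
    _ ≤ atTop.liminf fun k => a (ns k) := liminf_le_liminf (.of_forall fun k => hle (ns k))
    _ = L := (ha.comp hns.tendsto_atTop).liminf_eq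

theorem MeasureTheory.Lp.tendsto_of_tendsto_eLpNorm_sub [IsProbabilityMeasure ν] {p : ℝ≥0∞}
    (hp : 1 ≤ p) {g : ℕ → Lp E 1 ν} {f : Lp E 1 ν}
    (h : Tendsto (fun n => eLpNorm (⇑(g n) - ⇑f) p ν) atTop (𝓝 0)) :
    Tendsto g atTop (𝓝 f) := by
  rw [Lp.tendsto_Lp_iff_tendsto_eLpNorm']
  exact tendsto_of_tendsto_of_tendsto_of_le_of_le tendsto_const_nhds h (fun n => zero_le)
    fun n => eLpNorm_le_eLpNorm_of_exponent_le hp (by fun_prop)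

theorem eLpNorm_apply_le_of_forall_memLp_top [IsProbabilityMeasure ν] {p : ℝ≥0∞} (hp1 : 1 ≤ p)
    (hp : p ≠ ⊤) {T : Lp E 1 ν → Lp F 1 ν} (hT : Continuous T)
    (hbdd : ∀ f : Lp E 1 ν, MemLp f ⊤ ν → eLpNorm (T f) p ν ≤ eLpNorm f p ν)
    {f : Lp E 1 ν} (hf : MemLp f p ν) : eLpNorm (T f) p ν ≤ eLpNorm f p ν := by
  obtain ⟨g, hg_top, hg_lim⟩ := hf.exists_seq_memLp_top_tendsto_eLpNorm_sub hp
  refine eLpNorm_le_of_tendsto_Lp_of_eLpNorm_le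
    ((hT.tendsto f).comp (Lp.tendsto_of_tendsto_eLpNorm_sub hp1 hg_lim))
    (by simpa using tendsto_const_nhds.add hg_lim) fun n => ?_
  calc eLpNorm (T (g n)) p ν ≤ eLpNorm (g n) p ν := hbdd _ (hg_top n)
    _ = eLpNorm (⇑f + (⇑(g n) - ⇑f)) p ν := by rw [add_sub_cancel]
    _ ≤ eLpNorm f p ν + eLpNorm (⇑(g n) - ⇑f) p ν :=
      eLpNorm_add_le (by fun_prop) (by fun_prop) hp1

theorem eLpNorm_iterate_le {p q : ℝ≥0∞} {T : Lp E q ν → Lp E q ν}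
    (hT : ∀ f : Lp E q ν, MemLp f p ν → eLpNorm (T f) p ν ≤ eLpNorm f p ν)
    {f : Lp E q ν} (hf : MemLp f p ν) : ∀ n, eLpNorm (T^[n] f) p ν ≤ eLpNorm f p ν
  | 0 => le_rfl
  | n + 1 => by
    have ih := eLpNorm_iterate_le hT hf n
    rw [Function.iterate_succ_apply']
    exact (hT _ ⟨Lp.aestronglyMeasurable _, ih.trans_lt hf.2⟩).trans ih

theorem MeasureTheory.MemLp.integral_mul_conj_eq_inner {f g : Z → ℂ} (hf : MemLp f 2 ν)
    (hg : MemLp g 2 ν) : ∫ z, f z * conj (g z) ∂ν = inner ℂ (hg.toLp g) (hf.toLp f) := by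
  rw [L2.inner_def]
  refine integral_congr_ae ?_
  filter_upwards [hf.coeFn_toLp, hg.coeFn_toLp] with z hfz hgz
  rw [RCLike.inner_apply, hfz, hgz, mul_comm]

theorem sq_toReal_eLpNorm_le_of_integral_mul_conj_eq {u v w : Z → ℂ} (hu : MemLp u 2 ν)
    (hv : MemLp v 2 ν) (hw : MemLp w 2 ν)
    (h : ∫ z, v z * conj (v z) ∂ν = ∫ z, u z * conj (w z) ∂ν) :
    (eLpNorm v 2 ν).toReal ^ 2 ≤ (eLpNorm u 2 ν).toReal * (eLpNorm w 2 ν).toReal := by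
  rw [hv.integral_mul_conj_eq_inner hv, hu.integral_mul_conj_eq_inner hw] at h
  rw [← Lp.norm_toLp v hv, ← Lp.norm_toLp u hu, ← Lp.norm_toLp w hw, mul_comm,
    ← inner_self_eq_norm_sq (𝕜 := ℂ), h]
  exact (RCLike.re_le_norm _).trans (norm_inner_le_norm _ _)

theorem eLpNorm_two_apply_le_of_memLp_top [IsProbabilityMeasure ν] {T : Lp ℂ 1 ν → Lp ℂ 1 ν}
    (hT_symm : ∀ f g : Lp ℂ 1 ν, MemLp f 2 ν → MemLp g 2 ν →
      ∫ z, T f z * conj (g z) ∂ν = ∫ z, f z * conj (T g z) ∂ν)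
    (hT_top : ∀ f : Lp ℂ 1 ν, MemLp f ⊤ ν → eLpNorm (T f) ⊤ ν ≤ eLpNorm f ⊤ ν)
    {f : Lp ℂ 1 ν} (hf : MemLp f ⊤ ν) : eLpNorm (T f) 2 ν ≤ eLpNorm f 2 ν := by
  have hle_top (n : ℕ) : eLpNorm (T^[n] f) 2 ν ≤ eLpNorm f ⊤ ν :=
    (eLpNorm_le_eLpNorm_of_exponent_le le_top (Lp.aestronglyMeasurable _)).trans
      (eLpNorm_iterate_le hT_top hf n)
  have hmem (n : ℕ) : MemLp (T^[n] f) 2 ν :=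
    ⟨Lp.aestronglyMeasurable _, (hle_top n).trans_lt hf.2⟩
  set b : ℕ → ℝ := fun n => (eLpNorm (T^[n] f) 2 ν).toReal
  have hbdd : BddAbove (Set.range b) :=
    ⟨(eLpNorm f ⊤ ν).toReal,
      Set.forall_mem_range.2 fun n => ENNReal.toReal_mono hf.2.ne (hle_top n)⟩
  have hlog (n : ℕ) : b (n + 1) ^ 2 ≤ b n * b (n + 2) := by
    have hsymm := hT_symm _ _ (hmem n) (hmem (n + 1))
    rw [← Function.iterate_succ_apply' T n, ← Function.iterate_succ_apply' T (n + 1)] at hsymm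
    exact sq_toReal_eLpNorm_le_of_integral_mul_conj_eq (hmem n) (hmem (n + 1)) (hmem (n + 2))
      hsymm
  exact (ENNReal.toReal_le_toReal (hmem 1).2.ne (hmem 0).2.ne).1
    (le_of_sq_le_mul_of_bddAbove (fun n => ENNReal.toReal_nonneg) hbdd hlog)

end

theorem riesz_thorin_corollary_general {Z : Type*} [MeasurableSpace Z]
    (ν : Measure Z) [IsProbabilityMeasure ν]
    (T : Lp ℂ 1 ν →L[ℂ] Lp ℂ 1 ν)
    -- the restriction of T to L² is self-adjoint: ⟨Tf, g⟩ = ⟨f, Tg⟩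
    (hT2sa : ∀ f g : Lp ℂ 1 ν, MemLp (f : Z → ℂ) 2 ν → MemLp (g : Z → ℂ) 2 ν →
      ∫ z, (T f : Z → ℂ) z * conj ((g : Z → ℂ) z) ∂ν =
        ∫ z, (f : Z → ℂ) z * conj ((T g : Z → ℂ) z) ∂ν)
    -- the restriction of T to L^∞ has operator norm at most 1
    (hTinf1 : ∀ f : Lp ℂ 1 ν, MemLp (f : Z → ℂ) ⊤ ν →
      eLpNorm (T f : Z → ℂ) ⊤ ν ≤ eLpNorm (f : Z → ℂ) ⊤ ν) :
    -- conclusion: ‖T‖_{L²→L²} ≤ 1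
    ∀ f : Lp ℂ 1 ν, MemLp (f : Z → ℂ) 2 ν →
      eLpNorm (T f : Z → ℂ) 2 ν ≤ eLpNorm (f : Z → ℂ) 2 ν := by
  intro f hf
  exact eLpNorm_apply_le_of_forall_memLp_top one_le_two ENNReal.ofNat_ne_top T.continuous
    (fun g hg => eLpNorm_two_apply_le_of_memLp_top hT2sa hTinf1 hg) hf

theorem riesz_thorin_corollary {Z : Type*} [MeasurableSpace Z]
    (ν : Measure Z) [IsProbabilityMeasure ν]
    (T : Lp ℂ 1 ν →L[ℂ] Lp ℂ 1 ν)
    -- T maps L² into L²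
    (hT2 : ∀ f : Lp ℂ 1 ν, MemLp (f : Z → ℂ) 2 ν → MemLp (T f : Z → ℂ) 2 ν)
    -- T maps L^∞ into L^∞
    (hTinf : ∀ f : Lp ℂ 1 ν, MemLp (f : Z → ℂ) ⊤ ν → MemLp (T f : Z → ℂ) ⊤ ν)
    -- the restriction of T to L² is a bounded operator
    (hT2bdd : ∃ C : ℝ≥0∞, ∀ f : Lp ℂ 1 ν, MemLp (f : Z → ℂ) 2 ν →
      eLpNorm (T f : Z → ℂ) 2 ν ≤ C * eLpNorm (f : Z → ℂ) 2 ν)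
    -- the restriction of T to L² is self-adjoint: ⟨Tf, g⟩ = ⟨f, Tg⟩
    (hT2sa : ∀ f g : Lp ℂ 1 ν, MemLp (f : Z → ℂ) 2 ν → MemLp (g : Z → ℂ) 2 ν →
      ∫ z, (T f : Z → ℂ) z * conj ((g : Z → ℂ) z) ∂ν =
        ∫ z, (f : Z → ℂ) z * conj ((T g : Z → ℂ) z) ∂ν)
    -- the restriction of T to L^∞ has operator norm at most 1
    (hTinf1 : ∀ f : Lp ℂ 1 ν, MemLp (f : Z → ℂ) ⊤ ν →
      eLpNorm (T f : Z → ℂ) ⊤ ν ≤ eLpNorm (f : Z → ℂ) ⊤ ν) :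
    -- conclusion: ‖T‖_{L²→L²} ≤ 1
    ∀ f : Lp ℂ 1 ν, MemLp (f : Z → ℂ) 2 ν →
      eLpNorm (T f : Z → ℂ) 2 ν ≤ eLpNorm (f : Z → ℂ) 2 ν :=
  riesz_thorin_corollary_general ν T hT2sa hTinf1
end

section
/- Let γ = s₁⋯s_n ∈ F_r be written as a reduced word with n ≥ 1. (i) For 1 ≤ l ≤ n and any reduced word u = s₁⋯s_{l-1} t_l t_{l+1} ⋯ t_{l+k} with t_l ≠ s_l and k ≥ 0, one has ∫_{B_u} P(γ,ξ)^{1/2} dμ(ξ) = 1/(2r(2r-1)^{n/2 + k}). (ii) ∫_{B_γ} P(γ,ξ)^{1/2} dμ(ξ) = (2r-1)/(2r(2r-1)^{n/2}). -/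
/-!
Setting: the free group `F_r = ⟨a₁,…,a_r⟩` (`r ≥ 2`), its boundary `B` of infinite
reduced words, the visual measure `μ` on `B`, the Gromov product, the Poisson kernel
`P(γ,ξ) = (2r-1)^(2(γ|ξ)-|γ|)` and the Harish-Chandra function `Ξ`.
-/

open MeasureTheory Filter Topology ComplexConjugate
open scoped ENNReal

namespace ArxivFree

/-
On a cylinder `B_u` the Gromov product `(γ|ξ)` does not depend on `ξ`: it is `|γ|` when `u = γ`,
and `l - 1` when `u` first leaves `γ` at its `l`-th letter. So `P(γ,·)^{1/2}` is constant on
`B_u`, and its integral there is `μ(B_u) = (2r)⁻¹(2r-1)^{1-|u|}` times `(2r-1)^{(γ|ξ) - |γ|/2}`.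
-/

lemma measurableSet_cylinder {r : ℕ} (u : FreeGroup (Fin r)) :
    MeasurableSet (cylinder u) := by
  have hcyl : cylinder u = ⋂ i : Fin (FreeGroup.toWord u).length,
      (fun ξ : Boundary r => ξ.1 i) ⁻¹' {x | (FreeGroup.toWord u)[(i : ℕ)]? = some x} := by
    ext ξ
    simp only [cylinder, IsPrefixSeq, Set.mem_ofPred_eq, Set.mem_iInter, Set.mem_preimage]
    exact ⟨fun h i => h i i.2, fun h i hi => h ⟨i, hi⟩⟩
  rw [hcyl]
  exact MeasurableSet.iInter fun i =>
    ((measurable_pi_apply _).comp measurable_subtype_coe) (Set.to_countable _).measurableSet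

lemma gromov_eq_length_of_isPrefixSeq {r : ℕ} {w : List (Letter r)} {ξ : ℕ → Letter r}
    (hw : IsPrefixSeq w ξ) : gromov w ξ = w.length :=
  Nat.findGreatest_eq_iff.mpr ⟨le_rfl, fun _ i hi => hw i hi, fun _ hm hmw _ => by omega⟩

lemma gromov_eq_of_isPrefixSeq_of_getElem?_ne {r : ℕ} {w v : List (Letter r)}
    {ξ : ℕ → Letter r} {m : ℕ} (hv : IsPrefixSeq v ξ) (hm : m < v.length)
    (htake : v.take m = w.take m) (hne : v[m]? ≠ w[m]?) : gromov w ξ = m := by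
  have hmw : m ≤ w.length := by
    have := congrArg List.length htake
    simp only [List.length_take] at this
    omega
  refine Nat.findGreatest_eq_iff.mpr ⟨hmw, fun _ i hi => ?_, fun j hj _ hprefix => ?_⟩
  · have hagree := congrArg (·[i]?) htake
    simp only [List.getElem?_take, if_pos hi] at hagree
    rw [← hagree, hv i (by omega)]
  · exact hne ((hv m hm).trans (hprefix m hj).symm)

lemma sqrt_zpow_eq_rpow {x : ℝ} (hx : 0 ≤ x) (z : ℤ) : √(x ^ z) = x ^ ((z : ℝ) / 2) := by
  rw [← Real.rpow_intCast, Real.sqrt_eq_rpow, ← Real.rpow_mul hx]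
  ring_nf

lemma toReal_cylinder_measure {r : ℕ} (hr : 1 ≤ r) (m : ℕ) :
    (1 / (2 * (r : ℝ≥0∞) * (2 * (r : ℝ≥0∞) - 1) ^ m)).toReal
      = (2 * (r : ℝ))⁻¹ * (2 * (r : ℝ) - 1) ^ (-(m : ℝ)) := by
  have h1 : (1 : ℝ≥0∞) ≤ 2 * r := by
    calc (1 : ℝ≥0∞) ≤ 2 * 1 := by norm_num
      _ ≤ 2 * r := by gcongr; exact_mod_cast hr
  rw [one_div, ENNReal.toReal_inv, ENNReal.toReal_mul, ENNReal.toReal_pow,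
    ENNReal.toReal_sub_of_le h1 (by simp [ENNReal.mul_eq_top]), ENNReal.toReal_mul,
    Real.rpow_neg (by linarith [(by exact_mod_cast hr : (1 : ℝ) ≤ r)]), mul_inv,
    Real.rpow_natCast]
  simp

lemma setIntegral_sqrt_PK_cylinder {r : ℕ} (hr : 1 ≤ r) {μ : Measure (Boundary r)}
    {γ u : FreeGroup (Fin r)} {g : ℕ}
    (hμu : μ (cylinder u) =
      1 / (2 * (r : ℝ≥0∞) * (2 * (r : ℝ≥0∞) - 1) ^ ((FreeGroup.toWord u).length - 1)))
    (hg : ∀ ξ ∈ cylinder u, gromov (FreeGroup.toWord γ) ξ.1 = g) :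
    ∫ ξ in cylinder u, √(PK γ ξ) ∂μ = (2 * (r : ℝ))⁻¹ * (2 * (r : ℝ) - 1) ^
      ((g : ℝ) - ((FreeGroup.toWord γ).length : ℝ) / 2 - ((FreeGroup.toWord u).length - 1 : ℕ)) := by
  have hq : (0 : ℝ) < 2 * r - 1 := by
    have : (1 : ℝ) ≤ r := by exact_mod_cast hr
    linarith
  rw [setIntegral_congr_fun (measurableSet_cylinder u) (fun ξ hξ => by rw [PK, hg ξ hξ]),
    setIntegral_const, smul_eq_mul, measureReal_def, hμu, toReal_cylinder_measure hr,
    sqrt_zpow_eq_rpow hq.le, mul_assoc, ← Real.rpow_add hq]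
  congr 2
  push_cast
  ring

theorem integral_sqrt_poisson_on_cylinders_general {r : ℕ} (hr : 2 ≤ r)
    (μ : Measure (Boundary r))
    (hμ : ∀ u : FreeGroup (Fin r), u ≠ 1 →
      μ (cylinder u) =
        1 / (2 * (r : ℝ≥0∞) * (2 * (r : ℝ≥0∞) - 1) ^ ((FreeGroup.toWord u).length - 1)))
    (γ : FreeGroup (Fin r)) (hγ : γ ≠ 1) :
    (∀ (u : FreeGroup (Fin r)) (l k : ℕ), 1 ≤ l → l ≤ (FreeGroup.toWord γ).length →
      (FreeGroup.toWord u).length = l + k →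
      (FreeGroup.toWord u).take (l - 1) = (FreeGroup.toWord γ).take (l - 1) →
      (FreeGroup.toWord u)[l - 1]? ≠ (FreeGroup.toWord γ)[l - 1]? →
      ∫ ξ in cylinder u, Real.sqrt (PK γ ξ) ∂μ =
        1 / (2 * (r : ℝ) *
          (2 * (r : ℝ) - 1) ^ (((FreeGroup.toWord γ).length : ℝ) / 2 + (k : ℝ)))) ∧
    (∫ ξ in cylinder γ, Real.sqrt (PK γ ξ) ∂μ =
      (2 * (r : ℝ) - 1) /
        (2 * (r : ℝ) * (2 * (r : ℝ) - 1) ^ (((FreeGroup.toWord γ).length : ℝ) / 2))) := by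
  have hr1 : 1 ≤ r := by omega
  have hq : (0 : ℝ) < 2 * r - 1 := by
    have : (2 : ℝ) ≤ r := by exact_mod_cast hr
    linarith
  have hγlen : 1 ≤ (FreeGroup.toWord γ).length := by
    rw [Nat.one_le_iff_ne_zero, Ne, List.length_eq_zero_iff, FreeGroup.toWord_eq_nil_iff]
    exact hγ
  refine ⟨fun u l k hl _ hlu htake hne => ?_, ?_⟩
  · have hu : u ≠ 1 := by
      rintro rfl
      simp only [FreeGroup.toWord_one, List.length_nil] at hlu
      omega
    have hexp : ((l - 1 : ℕ) : ℝ) - ((FreeGroup.toWord γ).length : ℝ) / 2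
        - ((FreeGroup.toWord u).length - 1 : ℕ) = -(((FreeGroup.toWord γ).length : ℝ) / 2 + k) := by
      rw [hlu]
      push_cast [Nat.cast_sub hl, Nat.cast_sub (show 1 ≤ l + k by omega)]
      ring
    rw [setIntegral_sqrt_PK_cylinder hr1 (hμ u hu) fun ξ hξ =>
        gromov_eq_of_isPrefixSeq_of_getElem?_ne hξ (by omega) htake hne,
      hexp, Real.rpow_neg hq.le]
    ring
  · have hexp : ((FreeGroup.toWord γ).length : ℝ) - ((FreeGroup.toWord γ).length : ℝ) / 2
        - ((FreeGroup.toWord γ).length - 1 : ℕ) = 1 - ((FreeGroup.toWord γ).length : ℝ) / 2 := by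
      push_cast [Nat.cast_sub hγlen]
      ring
    rw [setIntegral_sqrt_PK_cylinder hr1 (hμ γ hγ) fun ξ hξ => gromov_eq_length_of_isPrefixSeq hξ,
      hexp, Real.rpow_sub hq, Real.rpow_one]
    ring

/-- Lemma: integrals of $P(γ,·)^{1/2}$ over cylinders.
Let $γ = s₁⋯s_n$ be a reduced word, $n ≥ 1$.
(i) For $1 ≤ l ≤ n$ and a reduced word $u = s₁⋯s_{l-1} t_l ⋯ t_{l+k}$ with
$t_l ≠ s_l$ (i.e. $u$ has length $l+k$, agrees with $γ$ on the first $l-1$ letters,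
and differs from it at the $l$-th letter):
$∫_{B_u} P(γ,ξ)^{1/2} dμ(ξ) = 1/(2r(2r-1)^{n/2+k})$.
(ii) $∫_{B_γ} P(γ,ξ)^{1/2} dμ(ξ) = (2r-1)/(2r(2r-1)^{n/2})$. -/
theorem integral_sqrt_poisson_on_cylinders {r : ℕ} (hr : 2 ≤ r)
    [BorelSpace (Boundary r)]
    (μ : Measure (Boundary r)) [IsProbabilityMeasure μ]
    (hμ : ∀ u : FreeGroup (Fin r), u ≠ 1 →
      μ (cylinder u) =
        1 / (2 * (r : ℝ≥0∞) * (2 * (r : ℝ≥0∞) - 1) ^ ((FreeGroup.toWord u).length - 1)))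
    (γ : FreeGroup (Fin r)) (hγ : γ ≠ 1) :
    (∀ (u : FreeGroup (Fin r)) (l k : ℕ), 1 ≤ l → l ≤ (FreeGroup.toWord γ).length →
      (FreeGroup.toWord u).length = l + k →
      (FreeGroup.toWord u).take (l - 1) = (FreeGroup.toWord γ).take (l - 1) →
      (FreeGroup.toWord u)[l - 1]? ≠ (FreeGroup.toWord γ)[l - 1]? →
      ∫ ξ in cylinder u, Real.sqrt (PK γ ξ) ∂μ =
        1 / (2 * (r : ℝ) *
          (2 * (r : ℝ) - 1) ^ (((FreeGroup.toWord γ).length : ℝ) / 2 + (k : ℝ)))) ∧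
    (∫ ξ in cylinder γ, Real.sqrt (PK γ ξ) ∂μ =
      (2 * (r : ℝ) - 1) /
        (2 * (r : ℝ) * (2 * (r : ℝ) - 1) ^ (((FreeGroup.toWord γ).length : ℝ) / 2))) :=
  integral_sqrt_poisson_on_cylinders_general hr μ hμ γ hγ

end ArxivFree
end

section
/- Let u, w be nontrivial elements of F_r such that neither is a prefix of the other (equivalently B_u ∩ B_w = ∅). Then (1/|S_n|) · Σ_{γ ∈ S_n, u prefix of γ} ⟨π(γ)1_B, 1_{B_w}⟩ / Ξ(γ) converges to 0 as n → ∞, where ⟨π(γ)1_B, 1_{B_w}⟩ = ∫_{B_w} P(γ,ξ)^{1/2} dμ(ξ). -/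
/-!
Setting: the free group `F_r = ⟨a₁,…,a_r⟩` (`r ≥ 2`), its boundary `B` of infinite
reduced words, the visual measure `μ` on `B`, the Gromov product, the Poisson kernel
`P(γ,ξ) = (2r-1)^(2(γ|ξ)-|γ|)` and the Harish-Chandra function `Ξ`.
-/

open MeasureTheory Filter Topology ComplexConjugate
open scoped ENNReal

namespace ArxivFree

/-!
For `γ` extending `u` and `ξ ∈ B_w`, the Gromov product `(γ|ξ)` stays below `|u|`: otherwise
`u` and `w` would both be prefixes of `ξ`, hence comparable. So the matrix coefficient is at most
`(2r-1)^|u| (2r-1)^(-|γ|/2)`. On the other hand, the level sets `{(γ|ξ) > k}` are cylinders of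
measure `1/(2r(2r-1)^k)`, and integrating `(2r-1)^(γ|ξ)` layer by layer gives
`Ξ(γ) = (1 + |γ|(r-1)/r) (2r-1)^(-|γ|/2)`. Hence every summand is `O(1/n)` on `S_n`, and so is
their average.
-/

open Finset in
lemma one_div_card_mul_sum_filter_le {ι : Type*} (s : Finset ι) (p : ι → Prop) [DecidablePred p]
    (f : ι → ℝ) {B : ℝ} (hB : 0 ≤ B) (hf : ∀ x ∈ s, p x → f x ≤ B) :
    1 / #s * ∑ x ∈ s with p x, f x ≤ B := by
  have hsum : ∑ x ∈ s with p x, f x ≤ #s * B :=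
    calc ∑ x ∈ s with p x, f x ≤ #(s.filter p) * B := by
          simpa using sum_le_card_nsmul _ _ _ fun x hx =>
            hf x (mem_filter.1 hx).1 (mem_filter.1 hx).2
      _ ≤ #s * B := mul_le_mul_of_nonneg_right (by exact_mod_cast card_filter_le s p) hB
  rcases (#s).eq_zero_or_pos with hs | hs
  · simpa [hs] using hB
  · calc 1 / #s * ∑ x ∈ s with p x, f x ≤ 1 / #s * (#s * B) := by gcongr
      _ = B := by field_simp

open Finset in
lemma pow_eq_one_add_sum_indicator {X : Type*} (q : ℝ) {f : X → ℕ} {n : ℕ}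
    (hfn : ∀ x, f x ≤ n) :
    (fun x => q ^ f x) =
      fun x => 1 + ∑ k ∈ range n, {x | k < f x}.indicator (fun _ => (q - 1) * q ^ k) x := by
  funext x
  have hrange : (range n).filter (· < f x) = range (f x) := by
    ext k; simp only [mem_filter, mem_range]; have := hfn x; omega
  simp only [Set.indicator_apply, Set.mem_ofPred_eq]
  rw [← sum_filter, hrange, ← mul_sum, mul_comm, geom_sum_mul]
  ring

open Finset in
lemma integral_pow_eq_one_add_sum {X : Type*} [MeasurableSpace X] (μ : Measure X)
    [IsProbabilityMeasure μ] (q : ℝ) {f : X → ℕ} (hf : Measurable f) {n : ℕ}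
    (hfn : ∀ x, f x ≤ n) :
    ∫ x, q ^ f x ∂μ = 1 + ∑ k ∈ range n, μ.real {x | k < f x} * ((q - 1) * q ^ k) := by
  have hmeas (k : ℕ) : MeasurableSet {x | k < f x} := hf measurableSet_Ioi
  have hint (k : ℕ) : Integrable ({x | k < f x}.indicator fun _ => (q - 1) * q ^ k) μ :=
    (integrable_const _).indicator (hmeas k)
  rw [pow_eq_one_add_sum_indicator q hfn, integral_add (integrable_const 1)
    (integrable_finsetSum _ fun k _ => hint k), integral_finsetSum _ fun k _ => hint k]
  simp [integral_indicator_const _ (hmeas _)]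

variable {r : ℕ}

lemma IsPrefixSeq.prefix_or_prefix {l l' : List (Letter r)} {ξ : ℕ → Letter r}
    (h : IsPrefixSeq l ξ) (h' : IsPrefixSeq l' ξ) : l <+: l' ∨ l' <+: l := by
  wlog hle : l.length ≤ l'.length generalizing l l'
  · exact (this h' h (by omega)).symm
  refine .inl (List.prefix_iff_getElem?.2 fun i hi => ?_)
  rw [h' i (by omega), ← h i hi, List.getElem?_eq_getElem hi]

lemma measurableSet_setOf_isPrefixSeq (l : List (Letter r)) :
    MeasurableSet {ξ : Boundary r | IsPrefixSeq l ξ.1} := by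
  simp only [IsPrefixSeq, Set.ofPred_forall]
  exact .iInter fun i => .iInter fun _ => measurableSet_setOfPred.2 <|
    (Measurable.of_discrete (f := fun a : Letter r => l[i]? = some a)).comp
      ((measurable_pi_apply i).comp measurable_subtype_coe)

lemma toWord_mk_take (γ : FreeGroup (Fin r)) (k : ℕ) :
    (FreeGroup.mk (γ.toWord.take k)).toWord = γ.toWord.take k :=
  FreeGroup.toWord_mk.trans
    (FreeGroup.isReduced_toWord.infix (List.take_prefix k _).isInfix).reduce_eq

lemma gromov_le (l : List (Letter r)) (ξ : ℕ → Letter r) : gromov l ξ ≤ l.length :=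
  Nat.findGreatest_le _

lemma gromov_spec (l : List (Letter r)) (ξ : ℕ → Letter r) :
    ∀ i < gromov l ξ, l[i]? = some (ξ i) :=
  Nat.findGreatest_spec (P := fun k => ∀ i < k, l[i]? = some (ξ i)) (Nat.zero_le _)
    fun _ hi => absurd hi (Nat.not_lt_zero _)

lemma isPrefixSeq_take_iff_le_gromov {l : List (Letter r)} {ξ : ℕ → Letter r} {k : ℕ}
    (hk : k ≤ l.length) : IsPrefixSeq (l.take k) ξ ↔ k ≤ gromov l ξ := by
  refine ⟨fun h => Nat.le_findGreatest hk fun i hi => ?_, fun h i hi => ?_⟩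
  · simpa [hi] using h i (by simp; omega)
  · rw [List.length_take] at hi
    rw [List.getElem?_take_of_lt (by omega)]
    exact gromov_spec l ξ i (by omega)

lemma measurable_gromov (l : List (Letter r)) :
    Measurable fun ξ : Boundary r => gromov l ξ.1 := by
  refine measurable_of_Ici fun k => ?_
  by_cases hk : k ≤ l.length
  · convert measurableSet_setOf_isPrefixSeq (l.take k) using 1
    ext ξ
    exact (isPrefixSeq_take_iff_le_gromov hk).symm
  · convert MeasurableSet.empty
    ext ξ
    simpa using (gromov_le l ξ.1).trans_lt (not_le.1 hk)

lemma gromov_lt_length_of_not_prefix {l l' m : List (Letter r)} {ξ : ℕ → Letter r}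
    (hm : l <+: m) (hξ : IsPrefixSeq l' ξ) (h₁ : ¬ l <+: l') (h₂ : ¬ l' <+: l) :
    gromov m ξ < l.length := by
  by_contra! hle
  have hl : IsPrefixSeq l ξ := fun i hi => by
    rw [List.getElem?_eq_getElem hi, hm.getElem hi, ← List.getElem?_eq_getElem]
    exact gromov_spec m ξ i (by omega)
  exact (hl.prefix_or_prefix hξ).elim h₁ h₂

def IsVisualMeasure (μ : Measure (Boundary r)) : Prop :=
  ∀ u : FreeGroup (Fin r), u ≠ 1 →
    μ (cylinder u) =
      1 / (2 * (r : ℝ≥0∞) * (2 * (r : ℝ≥0∞) - 1) ^ ((FreeGroup.toWord u).length - 1))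

lemma IsVisualMeasure.measureReal_cylinder {μ : Measure (Boundary r)} (hμ : IsVisualMeasure μ)
    (hr : 0 < r) {u : FreeGroup (Fin r)} (hu : u ≠ 1) :
    μ.real (cylinder u) = 1 / (2 * r * (2 * r - 1) ^ (u.toWord.length - 1)) := by
  have h1 : (1 : ℝ≥0∞) ≤ 2 * r := by norm_cast; omega
  have h2 : 2 * (r : ℝ≥0∞) ≠ ∞ := by finiteness
  simp [measureReal_def, hμ u hu, ENNReal.toReal_sub_of_le h1 h2]

lemma IsVisualMeasure.measureReal_lt_gromov {μ : Measure (Boundary r)}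
    (hμ : IsVisualMeasure μ) (hr : 0 < r) (γ : FreeGroup (Fin r)) {k : ℕ}
    (hk : k < γ.toWord.length) :
    μ.real {ξ | k < gromov γ.toWord ξ.1} = 1 / (2 * r * (2 * r - 1) ^ k) := by
  set v := FreeGroup.mk (γ.toWord.take (k + 1))
  have hv : v.toWord.length = k + 1 := by rw [toWord_mk_take, List.length_take]; omega
  have hv1 : v ≠ 1 := fun h => by simp [h] at hv
  have hset : {ξ : Boundary r | k < gromov γ.toWord ξ.1} = cylinder v := by
    ext ξ
    simp only [cylinder, v, toWord_mk_take, Set.mem_ofPred_eq]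
    exact (isPrefixSeq_take_iff_le_gromov hk).symm
  rw [hset, hμ.measureReal_cylinder hr hv1, hv, Nat.add_sub_cancel]

lemma sqrt_PK_eq (hr : 0 < r) (γ : FreeGroup (Fin r)) (ξ : Boundary r) :
    √(PK γ ξ) =
      (2 * r - 1) ^ gromov γ.toWord ξ.1 / √(2 * r - 1) ^ γ.toWord.length := by
  have hq : (0 : ℝ) < 2 * r - 1 := by
    have : (1 : ℝ) ≤ r := by exact_mod_cast hr
    linarith
  rw [← Real.sqrt_sq (by positivity : (0 : ℝ) ≤ (2 * r - 1) ^ gromov γ.toWord ξ.1 /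
    √(2 * r - 1) ^ γ.toWord.length)]
  congr 1
  rw [PK, div_pow, ← pow_mul, pow_right_comm √(2 * (r : ℝ) - 1), Real.sq_sqrt hq.le,
    show 2 * (gromov γ.toWord ξ.1 : ℤ) - γ.toWord.length =
      ((gromov γ.toWord ξ.1 * 2 : ℕ) : ℤ) - (γ.toWord.length : ℕ) by push_cast; ring,
    zpow_sub₀ hq.ne', zpow_natCast, zpow_natCast]

lemma IsVisualMeasure.HC_eq {μ : Measure (Boundary r)} [IsProbabilityMeasure μ]
    (hμ : IsVisualMeasure μ) (hr : 0 < r) (γ : FreeGroup (Fin r)) :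
    HC μ γ = (1 + γ.toWord.length * ((r - 1) / r)) / √(2 * r - 1) ^ γ.toWord.length := by
  have hr' : (1 : ℝ) ≤ r := by exact_mod_cast hr
  have hlayer (k : ℕ) (hk : k ∈ Finset.range γ.toWord.length) :
      μ.real {ξ | k < gromov γ.toWord ξ.1} * ((2 * r - 1 - 1) * (2 * r - 1) ^ k) =
        ((r : ℝ) - 1) / r := by
    rw [hμ.measureReal_lt_gromov hr γ (Finset.mem_range.1 hk)]
    have : (0 : ℝ) < 2 * r - 1 := by linarith
    field_simp
    ring
  simp only [HC, sqrt_PK_eq hr, integral_div]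
  rw [integral_pow_eq_one_add_sum μ _ (measurable_gromov _) fun ξ => gromov_le _ ξ.1,
    Finset.sum_congr rfl hlayer, Finset.sum_const, Finset.card_range, nsmul_eq_mul]

lemma IsVisualMeasure.setIntegral_sqrt_PK_div_HC_le {μ : Measure (Boundary r)}
    [IsProbabilityMeasure μ] (hμ : IsVisualMeasure μ) (hr : 0 < r) (γ : FreeGroup (Fin r))
    {s : Set (Boundary r)} {m : ℕ} (hm : ∀ ξ ∈ s, gromov γ.toWord ξ.1 ≤ m) :
    (∫ ξ in s, √(PK γ ξ) ∂μ) / HC μ γ ≤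
      (2 * r - 1) ^ m / (1 + γ.toWord.length * ((r - 1) / r)) := by
  have hr' : (1 : ℝ) ≤ r := by exact_mod_cast hr
  have hq : (1 : ℝ) ≤ 2 * r - 1 := by linarith
  set c := √(2 * (r : ℝ) - 1) ^ γ.toWord.length
  have hc : 0 < c := by positivity
  have hint : ∫ ξ in s, √(PK γ ξ) ∂μ ≤ (2 * r - 1) ^ m / c :=
    calc ∫ ξ in s, √(PK γ ξ) ∂μ ≤ ‖∫ ξ in s, √(PK γ ξ) ∂μ‖ := Real.le_norm_self _
      _ ≤ (2 * r - 1) ^ m / c * μ.real s := by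
        refine norm_setIntegral_le_of_norm_le_const (measure_lt_top μ s) fun ξ hξ => ?_
        rw [Real.norm_of_nonneg (Real.sqrt_nonneg _), sqrt_PK_eq hr]
        exact div_le_div_of_nonneg_right (pow_le_pow_right₀ hq (hm ξ hξ)) hc.le
      _ ≤ (2 * r - 1) ^ m / c := mul_le_of_le_one_right (by positivity) measureReal_le_one
  rw [hμ.HC_eq hr, div_div_eq_mul_div, div_le_div_iff_of_pos_right (by positivity)]
  calc _ ≤ (2 * r - 1) ^ m / c * c := by gcongr
    _ = _ := div_mul_cancel₀ _ hc.ne'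

theorem matrix_coefficient_off_diagonal_general {r : ℕ} (hr : 2 ≤ r)
    (μ : Measure (Boundary r)) [IsProbabilityMeasure μ]
    (hμ : ∀ u : FreeGroup (Fin r), u ≠ 1 →
      μ (cylinder u) =
        1 / (2 * (r : ℝ≥0∞) * (2 * (r : ℝ≥0∞) - 1) ^ ((FreeGroup.toWord u).length - 1)))
    (u w : FreeGroup (Fin r))
    (huw : ¬ (FreeGroup.toWord u <+: FreeGroup.toWord w))
    (hwu : ¬ (FreeGroup.toWord w <+: FreeGroup.toWord u)) :
    Tendsto
      (fun n : ℕ => (1 / ((sphere r n).card : ℝ)) *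
        ∑ γ ∈ (sphere r n).filter (fun γ => FreeGroup.toWord u <+: FreeGroup.toWord γ),
          (∫ ξ in cylinder w, Real.sqrt (PK γ ξ) ∂μ) / HC μ γ)
      atTop (𝓝 0) := by
  have hr' : (2 : ℝ) ≤ r := by exact_mod_cast hr
  have hc : (0 : ℝ) < (r - 1) / r := div_pos (by linarith) (by linarith)
  set C := (2 * (r : ℝ) - 1) ^ (FreeGroup.toWord u).length
  have hC : 0 ≤ C := pow_nonneg (by linarith) _
  refine squeeze_zero (fun n => ?_) (fun n => ?_) (tendsto_const_nhds (x := C).div_atTop <|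
    tendsto_atTop_add_const_left _ 1 (tendsto_natCast_atTop_atTop.atTop_mul_const hc))
  · exact mul_nonneg (by positivity) <| Finset.sum_nonneg fun γ _ => div_nonneg
      (integral_nonneg fun _ => Real.sqrt_nonneg _) (integral_nonneg fun _ => Real.sqrt_nonneg _)
  · have hB : 0 ≤ C / (1 + n * ((r - 1) / r)) :=
      div_nonneg hC (add_nonneg zero_le_one (mul_nonneg n.cast_nonneg hc.le))
    refine one_div_card_mul_sum_filter_le _ _ _ hB fun γ hγ hγu => ?_
    have hlen : γ.toWord.length = n := by simpa [sphere] using hγ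
    rw [← hlen]
    exact IsVisualMeasure.setIntegral_sqrt_PK_div_HC_le hμ (by omega) γ fun ξ hξ =>
      (gromov_lt_length_of_not_prefix hγu hξ huw hwu).le

/-- Lemma: vanishing of off-diagonal matrix coefficients.
If neither of the nontrivial elements $u, w$ is a prefix of the other
(equivalently $B_u ∩ B_w = ∅$), then
$(1/|S_n|) Σ_{γ ∈ S_n, u ≼ γ} ⟨π(γ)1_B, 1_{B_w}⟩/Ξ(γ) → 0$,
where $⟨π(γ)1_B, 1_{B_w}⟩ = ∫_{B_w} P(γ,ξ)^{1/2} dμ(ξ)$. -/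
theorem matrix_coefficient_off_diagonal {r : ℕ} (hr : 2 ≤ r)
    [BorelSpace (Boundary r)]
    (μ : Measure (Boundary r)) [IsProbabilityMeasure μ]
    (hμ : ∀ u : FreeGroup (Fin r), u ≠ 1 →
      μ (cylinder u) =
        1 / (2 * (r : ℝ≥0∞) * (2 * (r : ℝ≥0∞) - 1) ^ ((FreeGroup.toWord u).length - 1)))
    (u w : FreeGroup (Fin r)) (hu : u ≠ 1) (hw : w ≠ 1)
    (huw : ¬ (FreeGroup.toWord u <+: FreeGroup.toWord w))
    (hwu : ¬ (FreeGroup.toWord w <+: FreeGroup.toWord u)) :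
    Tendsto
      (fun n : ℕ => (1 / ((sphere r n).card : ℝ)) *
        ∑ γ ∈ (sphere r n).filter (fun γ => FreeGroup.toWord u <+: FreeGroup.toWord γ),
          (∫ ξ in cylinder w, Real.sqrt (PK γ ξ) ∂μ) / HC μ γ)
      atTop (𝓝 0) :=
  matrix_coefficient_off_diagonal_general hr μ hμ u w huw hwu

end ArxivFree
end
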